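/- Let q ≥ 1, Γ ∈ 𝓕_i(a_1,…,a_q; b_1,…,b_q), and suppose a_q − 1 is a transit point of Γ. Let L_1(Γ) be the graph obtained from Γ by replacing its unique edge of the form (s, a_q − 1) by (s, a_q). Then L_1(Γ) ∈ 𝓕_i(a_1,…,a_{q−1}, a_q − 1; b_1,…,b_q) and sgn_i(L_1(Γ)) = −sgn_i(Γ). -/

import Mathlib

/-!
Redirecting the edge `(s, a_q - 1)` to `(s, a_q)` makes `a_q - 1` a source and `a_q` a transit
point and changes no other in- or out-degree, so the transit points are exchanged one for one.
Because out-degrees are at most one, the sink linked to a vertex is reached by walking forward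
along edges. Walks from sources that avoid `s` are unchanged; the new source `a_q - 1` reaches the
sink that `s` reached; and since in-degrees are at most one, the walk through `s` does not start
at `a_q`. So the linking permutation changes by a transposition.
-/

open Finset

/-- A "flow graph" is a finite set of directed edges with integer vertices. -/
abbrev FlowGraph : Type := Finset (ℤ × ℤ)

/-- The edges of `E` beginning at `r`. -/
def beginsAt (E : FlowGraph) (r : ℤ) : Finset (ℤ × ℤ) := E.filter (fun e => e.1 = r)

/-- The edges of `E` ending at `r`. -/
def endsAt (E : FlowGraph) (r : ℤ) : Finset (ℤ × ℤ) := E.filter (fun e => e.2 = r)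

/-- `E` is a flow with set of sources `A` and set of sinks `B`:
every edge `(s,t)` has `s < t`; the sources and sinks are pairwise distinct;
exactly one edge begins at each source (and none ends there); exactly one edge
ends at each sink (and none begins there); and every other vertex either meets
no edge, or exactly one edge ends at it and exactly one edge begins at it
(such a vertex is a transit point). -/
structure IsFlow (E : FlowGraph) (A B : Finset ℤ) : Prop where
  edge_lt : ∀ e ∈ E, e.1 < e.2
  disjAB : Disjoint A B
  source_out : ∀ a ∈ A, (beginsAt E a).card = 1
  source_in : ∀ a ∈ A, endsAt E a = ∅
  sink_in : ∀ b ∈ B, (endsAt E b).card = 1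
  sink_out : ∀ b ∈ B, beginsAt E b = ∅
  transit : ∀ r : ℤ, r ∉ A → r ∉ B →
      (beginsAt E r = ∅ ∧ endsAt E r = ∅) ∨
      ((beginsAt E r).card = 1 ∧ (endsAt E r).card = 1)

/-- The set of transit points of the flow `E` with sources `A` and sinks `B`:
the vertices meeting some edge which are neither sources nor sinks. -/
def transitSet (E : FlowGraph) (A B : Finset ℤ) : Finset ℤ :=
  ((E.image Prod.fst) ∪ (E.image Prod.snd)) \ (A ∪ B)

def IsTransitPoint (E : FlowGraph) (A B : Finset ℤ) (r : ℤ) : Prop :=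
  r ∈ transitSet E A B

/-- Two vertices are linked if they lie in the same connected component of `E`. -/
def Linked (E : FlowGraph) (x y : ℤ) : Prop :=
  Relation.ReflTransGen (fun u v => (u, v) ∈ E ∨ (v, u) ∈ E) x y

/-- The finset of values of a family of integers. -/
def srcSet {q : ℕ} (a : Fin q → ℤ) : Finset ℤ := Finset.image a Finset.univ

/-- Membership in `𝓕_i(a_1,…,a_q; b_1,…,b_q)` : a flow with sources the `a j`,
sinks the `b j`, and no transit point greater than `i`. -/
def InF {q : ℕ} (i : ℤ) (a b : Fin q → ℤ) (E : FlowGraph) : Prop :=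
  IsFlow E (srcSet a) (srcSet b) ∧
  ∀ r : ℤ, IsTransitPoint E (srcSet a) (srcSet b) r → r ≤ i

/-- `σ` is the linking permutation: the source `a j` is linked to the sink `b (σ j)`. -/
def IsLinkingPerm {q : ℕ} (E : FlowGraph) (a b : Fin q → ℤ) (σ : Equiv.Perm (Fin q)) : Prop :=
  ∀ j : Fin q, Linked E (a j) (b (σ j))

/-- The `i`-sign of a flow `E` (with sources `A`, sinks given by the family `b` and
sinks-set `B`), computed from a linking permutation `σ`:
`sgn σ * (-1) ^ (Σ_j (b_j - i) + #transit points)`. -/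
def signValue {q : ℕ} (i : ℤ) (b : Fin q → ℤ) (σ : Equiv.Perm (Fin q))
    (E : FlowGraph) (A B : Finset ℤ) : ℤ :=
  (Equiv.Perm.sign σ : ℤ) *
    (-1) ^ ((∑ j : Fin q, (b j - i)).toNat + (transitSet E A B).card)

namespace IsFlow

variable {E : FlowGraph} {A B : Finset ℤ}

theorem card_beginsAt_le_one (hE : IsFlow E A B) (x : ℤ) : (beginsAt E x).card ≤ 1 := by
  by_cases hA : x ∈ A
  · exact (hE.source_out x hA).le
  by_cases hB : x ∈ B
  · simp [hE.sink_out x hB]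
  rcases hE.transit x hA hB with ⟨h, -⟩ | ⟨h, -⟩ <;> simp [h]

theorem card_endsAt_le_one (hE : IsFlow E A B) (x : ℤ) : (endsAt E x).card ≤ 1 := by
  by_cases hA : x ∈ A
  · simp [hE.source_in x hA]
  by_cases hB : x ∈ B
  · exact (hE.sink_in x hB).le
  rcases hE.transit x hA hB with ⟨-, h⟩ | ⟨-, h⟩ <;> simp [h]

end IsFlow

namespace FlowGraph

noncomputable def next (E : FlowGraph) (x : ℤ) : ℤ :=
  if h : (beginsAt E x).Nonempty then h.choose.2 else x

-- `E.card` steps reach the end of every walk, since each step uses up an edge.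
noncomputable def sinkOf (E : FlowGraph) (x : ℤ) : ℤ := (next E)^[E.card] x

variable {E : FlowGraph} {x y : ℤ}

theorem next_of_beginsAt_eq_empty (h : beginsAt E x = ∅) : next E x = x := by
  simp [next, h]

theorem mk_next_mem (h : (beginsAt E x).Nonempty) : (x, next E x) ∈ E := by
  have hmem := mem_filter.mp h.choose_spec
  rw [next, dif_pos h]
  exact (Prod.ext hmem.2.symm rfl : (x, h.choose.2) = h.choose) ▸ hmem.1

theorem next_eq_of_mem (hdeg : (beginsAt E x).card ≤ 1) (h : (x, y) ∈ E) : next E x = y := by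
  have hne : (beginsAt E x).Nonempty := ⟨_, mem_filter.mpr ⟨h, rfl⟩⟩
  exact congrArg Prod.snd <| card_le_one.mp hdeg _ (mem_filter.mpr ⟨mk_next_mem hne, rfl⟩) _
    (mem_filter.mpr ⟨h, rfl⟩)

theorem next_eq_or_mem (x : ℤ) : next E x = x ∨ (x, next E x) ∈ E := by
  by_cases h : (beginsAt E x).Nonempty
  · exact .inr (mk_next_mem h)
  · exact .inl (next_of_beginsAt_eq_empty (not_nonempty_iff_eq_empty.mp h))

section Increasing

variable (hlt : ∀ e ∈ E, e.1 < e.2)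
include hlt

theorem le_iterate_next (n : ℕ) (x : ℤ) : x ≤ (next E)^[n] x := by
  refine Function.id_le_iterate_of_id_le (fun y => ?_) n x
  rcases next_eq_or_mem (E := E) y with h | h
  · exact h.ge
  · exact (hlt _ h).le

theorem beginsAt_iterate_next_eq_empty (n : ℕ) (x : ℤ)
    (hn : (E.filter (fun e => x ≤ e.1)).card ≤ n) : beginsAt E ((next E)^[n] x) = ∅ := by
  induction n generalizing x with
  | zero =>
    rw [Function.iterate_zero_apply, ← subset_empty, ← card_eq_zero.mp (Nat.le_zero.mp hn)]
    exact fun e he => mem_filter.mpr ⟨(mem_filter.mp he).1, (mem_filter.mp he).2.ge⟩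
  | succ n ih =>
    rw [Function.iterate_succ_apply]
    by_cases hne : (beginsAt E x).Nonempty
    · have h := mk_next_mem hne
      have hx := hlt _ h
      refine ih _ (Nat.le_of_lt_succ (lt_of_lt_of_le (card_lt_card ?_) hn))
      refine ⟨fun e he => mem_filter.mpr ⟨(mem_filter.mp he).1, hx.le.trans (mem_filter.mp he).2⟩,
        fun hsub => ?_⟩
      have := (mem_filter.mp (hsub (mem_filter.mpr ⟨h, le_rfl⟩))).2
      exact absurd hx (not_lt.mpr this)
    · have hx := not_nonempty_iff_eq_empty.mp hne
      rwa [next_of_beginsAt_eq_empty hx, Function.iterate_fixed (next_of_beginsAt_eq_empty hx)]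

theorem beginsAt_sinkOf (x : ℤ) : beginsAt E (sinkOf E x) = ∅ :=
  beginsAt_iterate_next_eq_empty hlt _ x (card_le_card (filter_subset _ _))

theorem sinkOf_eq_iterate_next {n : ℕ} (h : beginsAt E ((next E)^[n] x) = ∅) :
    sinkOf E x = (next E)^[n] x := by
  have hfix := next_of_beginsAt_eq_empty h
  have hfix' := next_of_beginsAt_eq_empty (beginsAt_sinkOf hlt x)
  calc sinkOf E x = (next E)^[n] (sinkOf E x) := (Function.iterate_fixed hfix' n).symm
    _ = (next E)^[E.card] ((next E)^[n] x) := by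
      rw [sinkOf, ← Function.iterate_add_apply, add_comm, Function.iterate_add_apply]
    _ = (next E)^[n] x := Function.iterate_fixed hfix _

theorem sinkOf_iterate_next (n : ℕ) (x : ℤ) : sinkOf E ((next E)^[n] x) = sinkOf E x := by
  have h := beginsAt_sinkOf hlt ((next E)^[n] x)
  rw [sinkOf, ← Function.iterate_add_apply] at h
  rw [sinkOf_eq_iterate_next hlt h, Function.iterate_add_apply, sinkOf]

theorem sinkOf_eq_of_mem (hdeg : (beginsAt E x).card ≤ 1) (h : (x, y) ∈ E) :
    sinkOf E x = sinkOf E y := by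
  simpa [next_eq_of_mem hdeg h] using (sinkOf_iterate_next hlt 1 x).symm

theorem sinkOf_eq_of_linked (hdeg : ∀ z, (beginsAt E z).card ≤ 1) (h : Linked E x y) :
    sinkOf E x = sinkOf E y := by
  induction h with
  | refl => rfl
  | tail _ hstep ih =>
    rcases hstep with h' | h'
    · exact ih.trans (sinkOf_eq_of_mem hlt (hdeg _) h')
    · exact ih.trans (sinkOf_eq_of_mem hlt (hdeg _) h').symm

end Increasing

theorem sinkOf_of_beginsAt_eq_empty (h : beginsAt E x = ∅) : sinkOf E x = x :=
  Function.iterate_fixed (next_of_beginsAt_eq_empty h) _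

theorem eq_of_iterate_next_eq (hy : endsAt E y = ∅) {n : ℕ} (h : (next E)^[n] x = y) :
    x = y := by
  induction n with
  | zero => exact h
  | succ n ih =>
    rw [Function.iterate_succ_apply'] at h
    rcases next_eq_or_mem (E := E) ((next E)^[n] x) with h' | h'
    · exact ih (h'.symm.trans h)
    · have : ((next E)^[n] x, y) ∈ endsAt E y := mem_filter.mpr ⟨h ▸ h', rfl⟩
      simp [hy] at this

theorem exists_iterate_next_eq_of_iterate_next_eq (hdeg : ∀ z, (endsAt E z).card ≤ 1)
    {u v : ℤ} {m n : ℕ} (h : (next E)^[m] u = (next E)^[n] v) :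
    ∃ k, (next E)^[k] u = v ∨ (next E)^[k] v = u := by
  induction m generalizing n with
  | zero => exact ⟨n, .inr h.symm⟩
  | succ m ihm =>
    induction n with
    | zero => exact ⟨m + 1, .inl h⟩
    | succ n ihn =>
      rw [Function.iterate_succ_apply' _ m, Function.iterate_succ_apply' _ n] at h
      rcases next_eq_or_mem (E := E) ((next E)^[m] u) with hu | hu
      · exact ihm (n := n + 1) (by rw [← hu, h, Function.iterate_succ_apply'])
      rcases next_eq_or_mem (E := E) ((next E)^[n] v) with hv | hv
      · exact ihn (by rw [Function.iterate_succ_apply', h, hv])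
      refine ihm (congrArg Prod.fst (card_le_one.mp (hdeg _) _ (mem_filter.mpr ⟨hu, h⟩) _
        (mem_filter.mpr ⟨hv, rfl⟩)))

-- `L_1(Γ)` is `moveHead Γ s (a_q - 1) a_q`.
def moveHead (E : FlowGraph) (s t u : ℤ) : FlowGraph := insert (s, u) (E.erase (s, t))

variable {A B : Finset ℤ} {s t u : ℤ}

theorem beginsAt_moveHead (x : ℤ) : beginsAt (moveHead E s t u) x =
    if s = x then insert (s, u) ((beginsAt E x).erase (s, t)) else (beginsAt E x).erase (s, t) := by
  simp only [beginsAt, moveHead, filter_insert, filter_erase]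

theorem endsAt_moveHead (x : ℤ) : endsAt (moveHead E s t u) x =
    if u = x then insert (s, u) ((endsAt E x).erase (s, t)) else (endsAt E x).erase (s, t) := by
  simp only [endsAt, moveHead, filter_insert, filter_erase]

theorem beginsAt_moveHead_of_ne (hx : s ≠ x) : beginsAt (moveHead E s t u) x = beginsAt E x := by
  rw [beginsAt_moveHead, if_neg hx]
  exact erase_eq_of_notMem fun h => hx (mem_filter.mp h).2

theorem endsAt_moveHead_of_ne (htx : t ≠ x) (hux : u ≠ x) :
    endsAt (moveHead E s t u) x = endsAt E x := by
  rw [endsAt_moveHead, if_neg hux]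
  exact erase_eq_of_notMem fun h => htx (mem_filter.mp h).2

theorem moveHead_edge_lt (hlt : ∀ e ∈ E, e.1 < e.2) (hsu : s < u) :
    ∀ e ∈ moveHead E s t u, e.1 < e.2 := by
  intro e he
  rcases mem_insert.mp he with rfl | he
  · exact hsu
  · exact hlt e (mem_of_mem_erase he)

section Flow

variable (hE : IsFlow E A B) (hs : (s, t) ∈ E)
include hE hs

theorem beginsAt_eq_singleton_of_mem : beginsAt E s = {(s, t)} :=
  eq_singleton_iff_unique_mem.mpr ⟨mem_filter.mpr ⟨hs, rfl⟩,
    fun _ he => card_le_one.mp (hE.card_beginsAt_le_one s) _ he _ (mem_filter.mpr ⟨hs, rfl⟩)⟩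

theorem endsAt_eq_singleton_of_mem : endsAt E t = {(s, t)} :=
  eq_singleton_iff_unique_mem.mpr ⟨mem_filter.mpr ⟨hs, rfl⟩,
    fun _ he => card_le_one.mp (hE.card_endsAt_le_one t) _ he _ (mem_filter.mpr ⟨hs, rfl⟩)⟩

theorem card_beginsAt_eq_one_of_mem (htA : t ∉ A) (htB : t ∉ B) : (beginsAt E t).card = 1 := by
  rcases hE.transit t htA htB with ⟨-, h⟩ | ⟨h, -⟩
  · exact absurd (h ▸ mem_filter.mpr ⟨hs, rfl⟩ : (s, t) ∈ (∅ : Finset (ℤ × ℤ))) (notMem_empty _)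
  · exact h

theorem card_beginsAt_moveHead (x : ℤ) :
    (beginsAt (moveHead E s t u) x).card = (beginsAt E x).card := by
  rcases eq_or_ne s x with rfl | hx
  · simp [beginsAt_moveHead, beginsAt_eq_singleton_of_mem hE hs]
  · rw [beginsAt_moveHead_of_ne hx]

theorem endsAt_moveHead_left (htu : t ≠ u) : endsAt (moveHead E s t u) t = ∅ := by
  simp [endsAt_moveHead, endsAt_eq_singleton_of_mem hE hs, htu.symm]

end Flow

theorem endsAt_moveHead_right (hu : endsAt E u = ∅) :
    endsAt (moveHead E s t u) u = {(s, u)} := by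
  simp [endsAt_moveHead, hu]

theorem mem_vertices_iff : x ∈ E.image Prod.fst ∪ E.image Prod.snd ↔
    (beginsAt E x).Nonempty ∨ (endsAt E x).Nonempty := by
  simp [beginsAt, endsAt, Finset.Nonempty]

section Flow

variable (hE : IsFlow E A B) (hs : (s, t) ∈ E) (htA : t ∉ A) (htB : t ∉ B) (hu : u ∈ A)
include hE hs htA htB hu

theorem vertices_moveHead :
    (moveHead E s t u).image Prod.fst ∪ (moveHead E s t u).image Prod.snd =
      E.image Prod.fst ∪ E.image Prod.snd := by
  ext x
  simp only [mem_vertices_iff, ← card_pos, card_beginsAt_moveHead hE hs]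
  rcases eq_or_ne t x with rfl | htx
  · simp [card_beginsAt_eq_one_of_mem hE hs htA htB]
  rcases eq_or_ne u x with rfl | hux
  · simp [hE.source_out _ hu]
  · rw [endsAt_moveHead_of_ne htx hux]

theorem transitSet_moveHead :
    transitSet (moveHead E s t u) (insert t (A.erase u)) B =
      insert u ((transitSet E A B).erase t) := by
  have huV : u ∈ E.image Prod.fst ∪ E.image Prod.snd :=
    mem_vertices_iff.mpr (.inl (card_pos.mp (by rw [hE.source_out u hu]; exact one_pos)))
  have huB : u ∉ B := disjoint_left.mp hE.disjAB hu
  ext x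
  simp only [transitSet, vertices_moveHead hE hs htA htB hu, mem_sdiff, mem_union, mem_insert,
    mem_erase]
  grind

theorem card_transitSet_moveHead :
    (transitSet (moveHead E s t u) (insert t (A.erase u)) B).card =
      (transitSet E A B).card := by
  have ht : t ∈ transitSet E A B :=
    mem_sdiff.mpr ⟨mem_union_right _ (mem_image_of_mem _ hs), by simp [htA, htB]⟩
  have hu' : u ∉ (transitSet E A B).erase t := by simp [transitSet, hu]
  rw [transitSet_moveHead hE hs htA htB hu, card_insert_of_notMem hu', card_erase_add_one ht]

end Flow

theorem iterate_next_moveHead (h : ∀ m, (next E)^[m] x ≠ s) (n : ℕ) :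
    (next (moveHead E s t u))^[n] x = (next E)^[n] x := by
  induction n with
  | zero => rfl
  | succ n ih =>
    rw [Function.iterate_succ_apply', Function.iterate_succ_apply', ih]
    simp only [next, beginsAt_moveHead_of_ne (h n).symm]

theorem sinkOf_moveHead (hlt : ∀ e ∈ E, e.1 < e.2) (hsu : s < u) (h : ∀ m, (next E)^[m] x ≠ s) :
    sinkOf (moveHead E s t u) x = sinkOf E x := by
  have hend := beginsAt_sinkOf (moveHead_edge_lt (t := t) hlt hsu) x
  rw [sinkOf, iterate_next_moveHead h, beginsAt_moveHead_of_ne (h _).symm] at hend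
  rw [sinkOf_eq_iterate_next hlt hend, sinkOf, iterate_next_moveHead h]

end FlowGraph

open FlowGraph

theorem IsFlow.moveHead {E : FlowGraph} {A B : Finset ℤ} {s t u : ℤ} (hE : IsFlow E A B)
    (hs : (s, t) ∈ E) (htA : t ∉ A) (htB : t ∉ B) (hu : u ∈ A) (hsu : s < u) :
    IsFlow (moveHead E s t u) (insert t (A.erase u)) B := by
  have htu : t ≠ u := fun h => htA (h ▸ hu)
  have huB : u ∉ B := disjoint_left.mp hE.disjAB hu
  have hbegin := card_beginsAt_moveHead (u := u) hE hs
  refine ⟨moveHead_edge_lt hE.edge_lt hsu, ?_, ?_, ?_, ?_, ?_, ?_⟩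
  · exact disjoint_insert_left.mpr ⟨htB, hE.disjAB.mono_left (erase_subset u A)⟩
  · intro x hx
    rw [hbegin]
    rcases mem_insert.mp hx with rfl | hx
    · exact card_beginsAt_eq_one_of_mem hE hs htA htB
    · exact hE.source_out x (mem_of_mem_erase hx)
  · intro x hx
    rcases mem_insert.mp hx with rfl | hx
    · exact endsAt_moveHead_left hE hs htu
    · have hxA := mem_of_mem_erase hx
      rw [endsAt_moveHead_of_ne (by rintro rfl; exact htA hxA) (ne_of_mem_erase hx).symm]
      exact hE.source_in x hxA
  · intro x hx
    rw [endsAt_moveHead_of_ne (by rintro rfl; exact htB hx) (by rintro rfl; exact huB hx)]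
    exact hE.sink_in x hx
  · intro x hx
    rw [← card_eq_zero, hbegin, card_eq_zero]
    exact hE.sink_out x hx
  · intro x hxA hxB
    rw [← card_eq_zero, hbegin, ← card_eq_zero (s := endsAt _ x)]
    rcases eq_or_ne u x with rfl | hux
    · rw [endsAt_moveHead_right (hE.source_in u hu), hE.source_out u hu]
      simp
    have hxA' : x ∉ A := fun h => hxA (mem_insert_of_mem (mem_erase.mpr ⟨hux.symm, h⟩))
    rw [endsAt_moveHead_of_ne (by rintro rfl; exact hxA (mem_insert_self _ _)) hux]
    simpa only [card_eq_zero] using hE.transit x hxA' hxB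

theorem Equiv.Perm.ext_of_forall_ne {α : Type*} {π ρ : Equiv.Perm α} (j : α)
    (h : ∀ k, k ≠ j → π k = ρ k) : π = ρ := by
  ext k
  rcases eq_or_ne k j with rfl | hk
  · by_contra hne
    have hy : ρ.symm (π k) ≠ k := fun hy =>
      hne ((ρ.apply_symm_apply (π k)).symm.trans (congrArg ρ hy))
    exact hy (π.injective ((h _ hy).trans (ρ.apply_symm_apply _)))
  · exact h k hk

theorem IsLinkingPerm.sinkOf_eq {q : ℕ} {E : FlowGraph} {a b : Fin q → ℤ} {σ : Equiv.Perm (Fin q)}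
    (hσ : IsLinkingPerm E a b σ) (hE : IsFlow E (srcSet a) (srcSet b)) (k : Fin q) :
    sinkOf E (a k) = b (σ k) :=
  (sinkOf_eq_of_linked hE.edge_lt hE.card_beginsAt_le_one (hσ k)).trans
    (sinkOf_of_beginsAt_eq_empty (hE.sink_out _ (mem_image_of_mem _ (mem_univ _))))

/-- The source linked to `s` in `E` trades its sink with the source `a l`. -/
theorem IsLinkingPerm.moveHead {q : ℕ} {a b : Fin q → ℤ} (hb : Function.Injective b)
    {E : FlowGraph} {s t : ℤ} {l : Fin q} (hE : IsFlow E (srcSet a) (srcSet b))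
    (hE' : IsFlow (moveHead E s t (a l)) (srcSet (Function.update a l t)) (srcSet b))
    (hs : (s, t) ∈ E) {σ τ : Equiv.Perm (Fin q)} (hσ : IsLinkingPerm E a b σ)
    (hτ : IsLinkingPerm (moveHead E s t (a l)) (Function.update a l t) b τ) :
    ∃ j ≠ l, τ = σ * Equiv.swap j l := by
  have hlt := hE.edge_lt
  have hsl : s < a l := hE'.edge_lt _ (mem_insert_self _ _)
  have hσ' := hσ.sinkOf_eq hE
  have hτ' := hτ.sinkOf_eq hE'
  have hτl : b (τ l) = sinkOf E s := by
    rw [← hτ' l, Function.update_self, sinkOf_moveHead hlt hsl, sinkOf_eq_of_mem hlt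
      (hE.card_beginsAt_le_one s) hs]
    exact fun m hm => (hlt _ hs).not_ge (hm ▸ le_iterate_next hlt m t)
  set j := σ.symm (τ l)
  have hj : sinkOf E (a j) = sinkOf E s := by rw [hσ', σ.apply_symm_apply, hτl]
  have hjl : j ≠ l := by
    intro h
    rw [h] at hj
    obtain ⟨k, hk | hk⟩ := exists_iterate_next_eq_of_iterate_next_eq hE.card_endsAt_le_one hj
    · exact hsl.not_ge (hk ▸ le_iterate_next hlt k (a l))
    · exact hsl.ne (eq_of_iterate_next_eq (hE.source_in _ (mem_image_of_mem _ (mem_univ _))) hk)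
  refine ⟨j, hjl, Equiv.Perm.ext_of_forall_ne j fun k hkj => ?_⟩
  rcases eq_or_ne k l with rfl | hkl
  · simp [j]
  have havoid : ∀ m, (next E)^[m] (a k) ≠ s := fun m hm =>
    hkj (σ.injective (hb (by rw [← hσ', ← hσ', hj, ← hm, sinkOf_iterate_next hlt])))
  rw [Equiv.Perm.mul_apply, Equiv.swap_apply_of_ne_of_ne hkj hkl]
  exact hb (by rw [← hτ' k, Function.update_of_ne hkl, sinkOf_moveHead hlt hsl havoid, hσ'])

theorem srcSet_update {q : ℕ} {a : Fin q → ℤ} (ha : Function.Injective a) (l : Fin q) (x : ℤ) :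
    srcSet (Function.update a l x) = insert x ((srcSet a).erase (a l)) := by
  ext y
  simp only [srcSet, mem_image, mem_univ, true_and, mem_insert, mem_erase]
  constructor
  · rintro ⟨k, rfl⟩
    rcases eq_or_ne k l with rfl | hk
    · simp
    · simp [Function.update_of_ne hk, ha.ne hk]
  · rintro (rfl | ⟨hne, k, rfl⟩)
    · exact ⟨l, Function.update_self ..⟩
    · exact ⟨k, Function.update_of_ne (fun h => hne (congrArg a h)) ..⟩

theorem statement1_general {q : ℕ} (i : ℤ) (a b : Fin (q + 1) → ℤ)
    (ha : StrictMono a) (hb : StrictAnti b)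
    (hai : ∀ j, a j ≤ i)
    (E : FlowGraph) (hE : InF i a b E)
    (htr : IsTransitPoint E (srcSet a) (srcSet b) (a (Fin.last q) - 1))
    (s : ℤ) (hs : (s, a (Fin.last q) - 1) ∈ E) :
    InF i (Function.update a (Fin.last q) (a (Fin.last q) - 1)) b
      (insert (s, a (Fin.last q)) (E.erase (s, a (Fin.last q) - 1))) ∧
    ∀ σ τ : Equiv.Perm (Fin (q + 1)),
      IsLinkingPerm E a b σ →
      IsLinkingPerm (insert (s, a (Fin.last q)) (E.erase (s, a (Fin.last q) - 1)))
        (Function.update a (Fin.last q) (a (Fin.last q) - 1)) b τ →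
      signValue i b τ (insert (s, a (Fin.last q)) (E.erase (s, a (Fin.last q) - 1)))
          (srcSet (Function.update a (Fin.last q) (a (Fin.last q) - 1))) (srcSet b)
        = - signValue i b σ E (srcSet a) (srcSet b) := by
  obtain ⟨hF, hbound⟩ := hE
  set aq := a (Fin.last q)
  rw [show insert (s, aq) (E.erase (s, aq - 1)) = moveHead E s (aq - 1) aq from rfl]
  have ⟨htA, htB⟩ : aq - 1 ∉ srcSet a ∧ aq - 1 ∉ srcSet b := by
    simpa [transitSet, not_or] using (mem_sdiff.mp htr).2
  have haq : aq ∈ srcSet a := mem_image_of_mem _ (mem_univ _)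
  have hA' := srcSet_update ha.injective (Fin.last q) (aq - 1)
  have hF' : IsFlow (moveHead E s (aq - 1) aq) (srcSet (Function.update a (Fin.last q) (aq - 1)))
      (srcSet b) := hA' ▸ hF.moveHead hs htA htB haq (by linarith [hF.edge_lt _ hs])
  refine ⟨⟨hF', fun r hr => ?_⟩, fun σ τ hσ hτ => ?_⟩
  · rw [IsTransitPoint, hA', transitSet_moveHead hF hs htA htB haq, mem_insert] at hr
    exact hr.elim (· ▸ hai _) fun hr => hbound r (mem_of_mem_erase hr)
  · obtain ⟨j, hjl, rfl⟩ := hσ.moveHead hb.injective hF hF' hs hτ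
    rw [signValue, signValue, hA', card_transitSet_moveHead hF hs htA htB haq, map_mul,
      Equiv.Perm.sign_swap hjl]
    simp

/-- Lemma 12: if `a_q - 1` is a transit point of `Γ ∈ 𝓕_i(a_1,…,a_q; b_1,…,b_q)`,
then `L_1(Γ)` (replacing the edge `(s, a_q - 1)` by `(s, a_q)`) belongs to
`𝓕_i(a_1,…,a_{q-1}, a_q - 1; b_1,…,b_q)` and has `i`-sign opposite to that of `Γ`. -/
theorem statement1 {q : ℕ} (i : ℤ) (a b : Fin (q + 1) → ℤ)
    (ha : StrictMono a) (hb : StrictAnti b)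
    (hai : ∀ j, a j ≤ i) (hbi : ∀ j, i < b j)
    (E : FlowGraph) (hE : InF i a b E)
    (htr : IsTransitPoint E (srcSet a) (srcSet b) (a (Fin.last q) - 1))
    (s : ℤ) (hs : (s, a (Fin.last q) - 1) ∈ E) :
    InF i (Function.update a (Fin.last q) (a (Fin.last q) - 1)) b
      (insert (s, a (Fin.last q)) (E.erase (s, a (Fin.last q) - 1))) ∧
    ∀ σ τ : Equiv.Perm (Fin (q + 1)),
      IsLinkingPerm E a b σ →
      IsLinkingPerm (insert (s, a (Fin.last q)) (E.erase (s, a (Fin.last q) - 1)))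
        (Function.update a (Fin.last q) (a (Fin.last q) - 1)) b τ →
      signValue i b τ (insert (s, a (Fin.last q)) (E.erase (s, a (Fin.last q) - 1)))
          (srcSet (Function.update a (Fin.last q) (a (Fin.last q) - 1))) (srcSet b)
        = - signValue i b σ E (srcSet a) (srcSet b) :=
  statement1_general i a b ha hb hai E hE htr s hs
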